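/- Let j₀ ∈ ℕ and let (u_j)_{j ≥ j₀} be a sequence of positive real numbers with Σ_{j ≥ j₀} u_j = ∞. Then there exists a sequence (L_j)_{j ≥ j₀} of dyadic intervals L_j = [s_j/2^j, t_j/2^j] with integers 0 ≤ s_j < 2^j and s_j ≤ t_j, such that: (i) |L_j| = o(u_j) as j → ∞ (i.e., |L_j|/u_j → 0); and (ii) every x ∈ [0,1] belongs to infinitely many of the intervals L_j. -/

import Mathlib

/-!
Sweep `[0,1]` from left to right by consecutive dyadic intervals, the one of generation `j`
having length `⌊2^j u_j / S_j⌋ / 2^j ≤ u_j / S_j` where `S_j = u_{j₀} + ⋯ + u_j`, and start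
again at `0` whenever the right end passes `1`; then `|L_j| / u_j ≤ 1 / S_j → 0`.
By the Abel–Dini theorem `∑ u_j / S_j = ∞` (from `S_M ≥ 2 S_N` one gets
`∑_{N < j ≤ M} u_j / S_j ≥ (S_M - S_N) / S_M ≥ 1/2`), and rounding down to generation `j` loses
at most `2^{-j}`, so the lengths still have divergent sum: every sweep ends, and each complete
sweep covers `[0,1]`.
-/

open Filter Topology Finset

theorem tendsto_atTop_of_monotone_of_exists_add_le {P : ℕ → ℝ} (hP : Monotone P) {c : ℝ}
    (hc : 0 < c) (h : ∀ N, ∃ M, P N + c ≤ P M) : Tendsto P atTop atTop := by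
  have hunbdd : ∀ k : ℕ, ∃ N, P 0 + k * c ≤ P N := by
    intro k
    induction k with
    | zero => exact ⟨0, by simp⟩
    | succ k ih =>
      obtain ⟨N, hN⟩ := ih
      obtain ⟨M, hM⟩ := h N
      exact ⟨M, by push_cast; linarith⟩
  refine tendsto_atTop_atTop_of_monotone hP fun b => ?_
  obtain ⟨k, hk⟩ := Archimedean.arch (b - P 0) hc
  obtain ⟨N, hN⟩ := hunbdd k
  exact ⟨N, by rw [nsmul_eq_mul] at hk; linarith⟩

section AbelDini

variable {u : ℕ → ℝ} {J : ℕ}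

theorem sum_Icc_pos (hu : ∀ j, J ≤ j → 0 < u j) {N : ℕ} (hJN : J ≤ N) :
    0 < ∑ i ∈ Icc J N, u i :=
  sum_pos (fun i hi => hu i (mem_Icc.1 hi).1) (nonempty_Icc.2 hJN)

theorem sum_Icc_mono (hu : ∀ j, J ≤ j → 0 < u j) : Monotone fun N => ∑ i ∈ Icc J N, u i :=
  fun _ _ h => sum_le_sum_of_subset_of_nonneg (Icc_subset_Icc_right h)
    fun i hi _ => (hu i (mem_Icc.1 hi).1).le

theorem one_sub_div_sum_Icc_le_sum_Ico (hu : ∀ j, J ≤ j → 0 < u j) {N M : ℕ} (hJN : J ≤ N)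
    (hNM : N ≤ M) :
    1 - (∑ i ∈ Icc J N, u i) / ∑ i ∈ Icc J M, u i ≤
      ∑ j ∈ Ico (N + 1) (M + 1), u j / ∑ i ∈ Icc J j, u i := by
  set S := fun M => ∑ i ∈ Icc J M, u i
  change 1 - S N / S M ≤ ∑ j ∈ Ico (N + 1) (M + 1), u j / S j
  induction M, hNM using Nat.le_induction with
  | base => rw [div_self (sum_Icc_pos hu hJN).ne']; simp
  | succ M hNM ih =>
    have hSM : 0 < S M := sum_Icc_pos hu (hJN.trans hNM)
    have hS' : S (M + 1) = S M + u (M + 1) := sum_Icc_succ_top (by omega) _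
    have hu' := hu (M + 1) (by omega)
    have hSNM : S N ≤ S M := sum_Icc_mono hu hNM
    calc 1 - S N / S (M + 1) = (S M - S N) / S (M + 1) + u (M + 1) / S (M + 1) := by
          rw [hS']; field_simp; ring
      _ ≤ (S M - S N) / S M + u (M + 1) / S (M + 1) := by
          gcongr
          linarith
      _ = 1 - S N / S M + u (M + 1) / S (M + 1) := by rw [sub_div, div_self hSM.ne']
      _ ≤ _ := by rw [sum_Ico_succ_top (by omega)]; linarith

theorem tendsto_sum_range_div_sum_Icc (hu : ∀ j, J ≤ j → 0 < u j)
    (hdiv : Tendsto (fun N => ∑ j ∈ Icc J N, u j) atTop atTop) :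
    Tendsto (fun N => ∑ j ∈ range N, u j / ∑ i ∈ Icc J j, u i) atTop atTop := by
  set S := fun M => ∑ i ∈ Icc J M, u i
  set P := fun N => ∑ j ∈ range N, u j / S j
  have hnonneg : ∀ j, 0 ≤ u j / S j := by
    intro j
    rcases le_or_gt J j with hj | hj
    · exact div_nonneg (hu j hj).le (sum_Icc_pos hu hj).le
    · simp [S, Icc_eq_empty_of_lt hj] -- `u j / 0 = 0`
  have hP : Monotone P := monotone_nat_of_le_succ fun N => by
    simp only [P, sum_range_succ]; linarith [hnonneg N]
  refine tendsto_atTop_of_monotone_of_exists_add_le hP one_half_pos fun N => ?_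
  set N' := max N J
  have hSN' : 0 < S N' := sum_Icc_pos hu (le_max_right N J)
  obtain ⟨M, hN'M, hM⟩ :=
    ((eventually_ge_atTop N').and (hdiv.eventually_ge_atTop (2 * S N'))).exists
  have hSM : 0 < S M := hSN'.trans_le (sum_Icc_mono hu hN'M)
  refine ⟨M + 1, ?_⟩
  have hblock := one_sub_div_sum_Icc_le_sum_Ico hu (le_max_right N J) hN'M
  rw [sum_Ico_eq_sub _ (by omega)] at hblock
  have : S N' / S M ≤ 1 / 2 := by rw [div_le_iff₀ hSM]; linarith
  linarith [hP (show N ≤ N' + 1 by omega)]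

end AbelDini

theorem exists_mem_Icc_of_chain {α : Type*} [LinearOrder α] {a b : ℕ → α} {K N : ℕ}
    (hKN : K ≤ N) (hchain : ∀ j, K ≤ j → j < N → a (j + 1) ≤ b j) {x : α}
    (hxa : a K ≤ x) (hxb : x ≤ b N) : ∃ j, K ≤ j ∧ j ≤ N ∧ x ∈ Set.Icc (a j) (b j) := by
  induction N, hKN using Nat.le_induction with
  | base => exact ⟨K, le_rfl, le_rfl, hxa, hxb⟩
  | succ N hKN ih =>
    by_cases hx : x ≤ b N
    · obtain ⟨j, hKj, hjN, hj⟩ := ih (fun j hKj hjN => hchain j hKj (by omega)) hx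
      exact ⟨j, hKj, by omega, hj⟩
    · exact ⟨N + 1, by omega, le_rfl,
        (hchain N hKN (Nat.lt_succ_self N)).trans (le_of_not_ge hx), hxb⟩

theorem tendsto_sum_range_floor_two_pow_mul_div {a : ℕ → ℝ}
    (ha : Tendsto (fun N => ∑ j ∈ range N, a j) atTop atTop) :
    Tendsto (fun N => ∑ j ∈ range N, (⌊2 ^ j * a j⌋₊ : ℝ) / 2 ^ j) atTop atTop := by
  refine tendsto_atTop_mono (fun N => ?_) (tendsto_atTop_add_const_right _ (-2) ha)
  have hterm : ∀ j, a j - (1 / 2) ^ j ≤ (⌊2 ^ j * a j⌋₊ : ℝ) / 2 ^ j := fun j => by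
    rw [le_div_iff₀ (by positivity), sub_mul, div_pow, one_pow, one_div_mul_cancel (by positivity),
      mul_comm]
    exact (Nat.sub_one_lt_floor _).le
  calc ∑ j ∈ range N, a j + -2 ≤ ∑ j ∈ range N, (a j - (1 / 2) ^ j) := by
        rw [sum_sub_distrib]; linarith [sum_geometric_two_le N]
    _ ≤ _ := sum_le_sum fun j _ => hterm j

/-- Left endpoints of the sweep with interval lengths `n j / 2^j`: the interval of generation `j`
is `[dyadicSweep n j, dyadicSweep n j + n j] / 2^j`, the next one starts where it ends, and once
a right end reaches `1` the sweep restarts at `0`. -/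
def dyadicSweep (n : ℕ → ℕ) : ℕ → ℕ
  | 0 => 0
  | j + 1 => if dyadicSweep n j + n j < 2 ^ j then 2 * (dyadicSweep n j + n j) else 0

namespace dyadicSweep

variable {n : ℕ → ℕ}

theorem succ_of_lt {j : ℕ} (h : dyadicSweep n j + n j < 2 ^ j) :
    dyadicSweep n (j + 1) = 2 * (dyadicSweep n j + n j) := if_pos h

theorem succ_of_le {j : ℕ} (h : 2 ^ j ≤ dyadicSweep n j + n j) : dyadicSweep n (j + 1) = 0 :=
  if_neg h.not_gt

theorem lt_two_pow (n : ℕ → ℕ) : ∀ j, dyadicSweep n j < 2 ^ j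
  | 0 => Nat.one_pos
  | j + 1 => by
    by_cases h : dyadicSweep n j + n j < 2 ^ j
    · rw [succ_of_lt h, pow_succ]; omega
    · rw [succ_of_le (not_lt.1 h)]; positivity

theorem div_two_pow_succ_of_lt {j : ℕ} (h : dyadicSweep n j + n j < 2 ^ j) :
    (dyadicSweep n (j + 1) : ℝ) / 2 ^ (j + 1) = (dyadicSweep n j + n j : ℝ) / 2 ^ j := by
  rw [succ_of_lt h, pow_succ]; push_cast; field_simp

theorem div_two_pow_eq_add_sum {J N : ℕ} (hJN : J ≤ N)
    (h : ∀ j, J ≤ j → j < N → dyadicSweep n j + n j < 2 ^ j) :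
    (dyadicSweep n N : ℝ) / 2 ^ N =
      dyadicSweep n J / 2 ^ J + ∑ j ∈ Ico J N, (n j : ℝ) / 2 ^ j := by
  induction N, hJN using Nat.le_induction with
  | base => simp
  | succ N hJN ih =>
    rw [div_two_pow_succ_of_lt (h N hJN N.lt_succ_self), sum_Ico_succ_top hJN, add_div,
      ih fun j hJj hjN => h j hJj (by omega)]
    ring

theorem exists_first_overflow
    (hn : Tendsto (fun N => ∑ j ∈ range N, (n j : ℝ) / 2 ^ j) atTop atTop) (J : ℕ) :
    ∃ N, J ≤ N ∧ 2 ^ N ≤ dyadicSweep n N + n N ∧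
      ∀ j, J ≤ j → j < N → dyadicSweep n j + n j < 2 ^ j := by
  classical
  have hex : ∃ N, J ≤ N ∧ 2 ^ N ≤ dyadicSweep n N + n N := by
    by_contra! hno
    obtain ⟨N, hJN, hN⟩ := ((eventually_ge_atTop J).and
      (hn.eventually_ge_atTop (∑ j ∈ range J, (n j : ℝ) / 2 ^ j + 1))).exists
    have hsum := div_two_pow_eq_add_sum hJN fun j hJj _ => hno j hJj
    rw [sum_Ico_eq_sub _ hJN] at hsum
    have hlt : (dyadicSweep n N : ℝ) / 2 ^ N < 1 := by
      rw [div_lt_one (by positivity)]; exact_mod_cast lt_two_pow n N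
    have : (0 : ℝ) ≤ dyadicSweep n J / 2 ^ J := by positivity
    linarith
  exact ⟨Nat.find hex, (Nat.find_spec hex).1, (Nat.find_spec hex).2,
    fun j hJj hj => not_le.1 fun h => Nat.find_min hex hj ⟨hJj, h⟩⟩

theorem frequently_mem_Icc
    (hn : Tendsto (fun N => ∑ j ∈ range N, (n j : ℝ) / 2 ^ j) atTop atTop)
    {x : ℝ} (hx : x ∈ Set.Icc (0 : ℝ) 1) : ∃ᶠ j in atTop,
      x ∈ Set.Icc ((dyadicSweep n j : ℝ) / 2 ^ j) ((dyadicSweep n j + n j : ℝ) / 2 ^ j) := by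
  rw [frequently_atTop]
  intro J
  obtain ⟨N, hJN, hN, -⟩ := exists_first_overflow hn J
  obtain ⟨M, hNM, hM, hpass⟩ := exists_first_overflow hn (N + 1)
  have hxM : x ≤ (dyadicSweep n M + n M : ℝ) / 2 ^ M := by
    rw [le_div_iff₀ (by positivity)]
    calc x * 2 ^ M ≤ 2 ^ M := mul_le_of_le_one_left (by positivity) hx.2
      _ ≤ _ := by exact_mod_cast hM
  obtain ⟨j, hNj, -, hj⟩ :=
    exists_mem_Icc_of_chain (a := fun j => (dyadicSweep n j : ℝ) / 2 ^ j) hNM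
      (fun j hNj hjM => (div_two_pow_succ_of_lt (hpass j hNj hjM)).le)
      (by simpa [succ_of_le hN] using hx.1) hxM
  exact ⟨j, by omega, hj⟩

end dyadicSweep

/-- **Dyadic covering lemma.** If `(u_j)_{j ≥ j₀}` are positive reals with divergent sum,
there are dyadic intervals `L_j = [s_j/2^j, t_j/2^j]` (`s_j, t_j ∈ ℕ`, `0 ≤ s_j < 2^j`,
`s_j ≤ t_j`) with `|L_j| = o(u_j)` such that every point of `[0,1]` lies in infinitely
many `L_j`. -/
theorem dyadic_intervals_cover_infinitely_often
    (j₀ : ℕ) (u : ℕ → ℝ) (hu : ∀ j, j₀ ≤ j → 0 < u j)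
    (hdiv : Tendsto (fun N => ∑ j ∈ Finset.Icc j₀ N, u j) atTop atTop) :
    ∃ s t : ℕ → ℕ,
      (∀ j, j₀ ≤ j → s j < 2 ^ j ∧ s j ≤ t j) ∧
      Tendsto (fun j => (((t j : ℝ) - (s j : ℝ)) / 2 ^ j) / u j) atTop (𝓝 0) ∧
      ∀ x ∈ Set.Icc (0 : ℝ) 1,
        {j : ℕ | j₀ ≤ j ∧ x ∈ Set.Icc ((s j : ℝ) / 2 ^ j) ((t j : ℝ) / 2 ^ j)}.Infinite := by
  set S := fun j => ∑ i ∈ Icc j₀ j, u i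
  set n := fun j => ⌊2 ^ j * (u j / S j)⌋₊
  have hn : Tendsto (fun N => ∑ j ∈ range N, (n j : ℝ) / 2 ^ j) atTop atTop :=
    tendsto_sum_range_floor_two_pow_mul_div (tendsto_sum_range_div_sum_Icc hu hdiv)
  refine ⟨dyadicSweep n, fun j => dyadicSweep n j + n j,
    fun j _ => ⟨dyadicSweep.lt_two_pow n j, Nat.le_add_right _ _⟩, ?_, fun x hx => ?_⟩
  · refine squeeze_zero' (g := fun j => (S j)⁻¹) ?_ ?_ hdiv.inv_tendsto_atTop <;>
      filter_upwards [eventually_ge_atTop j₀] with j hj <;> push_cast <;>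
      rw [add_sub_cancel_left]
    · have := hu j hj
      positivity
    · have huj := hu j hj
      have hSj : 0 < S j := sum_Icc_pos hu hj
      calc (n j : ℝ) / 2 ^ j / u j ≤ 2 ^ j * (u j / S j) / 2 ^ j / u j := by
            gcongr
            exact Nat.floor_le (by positivity)
        _ = (S j)⁻¹ := by field_simp
  · rw [← Nat.frequently_atTop_iff_infinite]
    exact ((eventually_ge_atTop j₀).and_frequently (dyadicSweep.frequently_mem_Icc hn hx)).mono
      fun j hj => by exact_mod_cast hj
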